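/- arXiv:1311.7045 — 3 statements merged into one kernel-verified Lean document; each statement's English description precedes it below -/
import Mathlib

section
/- Let N ≥ 2 and let Ψ = {ψ_{m,n} : m = 1,…,4; n = 1,…,N−1} be the 4N−4 measurement vectors in ℂ^N defined below. If x, y ∈ ℂ^N both satisfy x[1] ≠ 0 and y[1] ≠ 0, and |⟨x, ψ_{m,n}⟩|² = |⟨y, ψ_{m,n}⟩|² for all m = 1,…,4 and n = 1,…,N−1, then there exists c ∈ ℂ with |c| = 1 such that y = c·x. (Theorem 2, part Ψ: the intensity measurement map A_Ψ is injective on S_Ψ = {x ∈ ℂ^N : x[1] ≠ 0} modulo a unimodular constant.) -/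
open Complex Matrix MeasureTheory

noncomputable section

/-- α = √((1 − 1/√3)/2) -/
def alph : ℂ := (Real.sqrt ((1 - 1/Real.sqrt 3)/2) : ℝ)

/-- β = e^{i5π/4}·√((1 + 1/√3)/2) -/
def beta : ℂ := Complex.exp (Complex.I * (5 * (Real.pi : ℂ) / 4)) *
  (Real.sqrt ((1 + 1/Real.sqrt 3)/2) : ℝ)

/-- the four frame vectors a₁ = (α,β), a₂ = (β,α), a₃ = (α,−β), a₄ = (−β,α) in ℂ² -/
def coef : Fin 4 → Fin 2 → ℂ := ![![alph, beta], ![beta, alph], ![alph, -beta], ![-beta, alph]]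

/-- inner product ⟨x,y⟩ = Σ x[n]·conj(y[n]) -/
def inn {N : ℕ} (x y : Fin N → ℂ) : ℂ := ∑ i, x i * (starRingEnd ℂ) (y i)

/-- Euclidean norm ‖x‖ = √⟨x,x⟩ -/
def nrm {N : ℕ} (x : Fin N → ℂ) : ℝ := Real.sqrt (inn x x).re

/-- outer product x y* -/
def outer {N : ℕ} (x y : Fin N → ℂ) : Matrix (Fin N) (Fin N) ℂ :=
  fun i j => x i * (starRingEnd ℂ) (y j)

/-- measurement vectors φ_{m,n} (0-based n: nonzero entries at positions n and n+1) -/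
def phiv (N : ℕ) (m : Fin 4) (n : ℕ) : Fin N → ℂ :=
  fun i => if (i : ℕ) = n then coef m 0 else if (i : ℕ) = n + 1 then coef m 1 else 0

/-- measurement vectors ψ_{m,n} (0-based n: nonzero entries at positions 0 and n+1) -/
def psiv (N : ℕ) (m : Fin 4) (n : ℕ) : Fin N → ℂ :=
  fun i => if (i : ℕ) = 0 then coef m 0 else if (i : ℕ) = n + 1 then coef m 1 else 0

/-- Hilbert–Schmidt inner product ⟨X,Y⟩ = trace(Y*X) -/
def hs {N : ℕ} (X Y : Matrix (Fin N) (Fin N) ℂ) : ℂ := Matrix.trace (Yᴴ * X)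

/-- Frobenius (Hilbert–Schmidt) norm -/
def frob {N : ℕ} (X : Matrix (Fin N) (Fin N) ℂ) : ℝ := Real.sqrt (Matrix.trace (Xᴴ * X)).re

/-- spectral norm (largest singular value) -/
def specNorm {N : ℕ} (A : Matrix (Fin N) (Fin N) ℂ) : ℝ :=
  sSup {r : ℝ | ∃ v : Fin N → ℂ, nrm v ≤ 1 ∧ r = nrm (A.mulVec v)}

/-! For each `n`, the four measurements with `ψ_{m,n}` only see the pair `(u, v) = (x[1], x[n+1])`.
Subtracting the measurements of the frame vectors `(α, ±β)` resp. `(±β, α)` yields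
`Re (αβ · conj (ū v))` and `Re (αβ · ū v)`, which determine `ū v` because `β` has nonzero real and
imaginary parts; adding them yields `α²|u|² + |β|²|v|²` and `|β|²|u|² + α²|v|²`, which determine `|u|²`
because `α² ≠ |β|²`. Knowing `conj x[1] · x[i]` for every `i` with `x[1] ≠ 0` pins `x` down up to the
unimodular factor `conj x[1] / conj y[1]`. -/

open ComplexConjugate

namespace Complex

theorem normSq_add_normSq_eq_and_re_mul_conj_eq {z w z' w' : ℂ}
    (hadd : normSq (z + w) = normSq (z' + w')) (hsub : normSq (z - w) = normSq (z' - w')) :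
    normSq z + normSq w = normSq z' + normSq w' ∧ (z * conj w).re = (z' * conj w').re := by
  rw [normSq_add, normSq_add] at hadd
  rw [normSq_sub, normSq_sub] at hsub
  constructor <;> linarith

theorem eq_of_re_mul_eq_of_re_conj_mul_eq {b w w' : ℂ} (hb_re : b.re ≠ 0) (hb_im : b.im ≠ 0)
    (h : (w * b).re = (w' * b).re) (hconj : (conj w * b).re = (conj w' * b).re) : w = w' := by
  simp only [mul_re, conj_re, conj_im] at h hconj
  apply Complex.ext
  · exact mul_right_cancel₀ hb_re (by linarith)
  · exact mul_right_cancel₀ hb_im (by linarith)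

end Complex

theorem eq_of_mul_add_mul_eq_of_mul_add_mul_eq {s t A B A' B' : ℝ} (hst : s ^ 2 ≠ t ^ 2)
    (h₁ : s * A + t * B = s * A' + t * B') (h₂ : t * A + s * B = t * A' + s * B') : A = A' := by
  have hsub : (s - t) * ((A - A') - (B - B')) = 0 := by linear_combination h₁ - h₂
  have hadd : (s + t) * ((A - A') + (B - B')) = 0 := by linear_combination h₁ + h₂
  have hs_sub : s - t ≠ 0 := fun h => hst (by rw [sub_eq_zero.1 h])
  have hs_add : s + t ≠ 0 := fun h => hst (by rw [eq_neg_of_add_eq_zero_left h, neg_sq])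
  have h₃ := (mul_eq_zero.1 hsub).resolve_left hs_sub
  have h₄ := (mul_eq_zero.1 hadd).resolve_left hs_add
  linarith

def frame2 (a b : ℂ) : Fin 4 → Fin 2 → ℂ := ![![a, b], ![b, a], ![a, -b], ![-b, a]]

theorem normSq_eq_and_conj_mul_eq_of_frame2 {a : ℝ} {b : ℂ} (ha : a ≠ 0) (hb_re : b.re ≠ 0)
    (hb_im : b.im ≠ 0) (hab : a ^ 2 ≠ normSq b) {u v u' v' : ℂ}
    (h : ∀ m, normSq (u * conj (frame2 a b m 0) + v * conj (frame2 a b m 1)) =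
      normSq (u' * conj (frame2 a b m 0) + v' * conj (frame2 a b m 1))) :
    normSq u = normSq u' ∧ conj u * v = conj u' * v' := by
  have h₀ := h 0; have h₁ := h 1; have h₂ := h 2; have h₃ := h 3
  simp only [frame2, Matrix.cons_val, conj_ofReal, map_neg, mul_neg, ← sub_eq_add_neg,
    neg_add_eq_sub] at h₀ h₁ h₂ h₃
  rw [add_comm (u * _), add_comm (u' * _)] at h₁
  obtain ⟨hn₀, hre₀⟩ := normSq_add_normSq_eq_and_re_mul_conj_eq h₀ h₂
  obtain ⟨hn₁, hre₁⟩ := normSq_add_normSq_eq_and_re_mul_conj_eq h₁ h₃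
  simp only [normSq_mul, normSq_ofReal, normSq_conj] at hn₀ hn₁
  have hre₀' : (conj (conj u * v) * b).re = (conj (conj u' * v') * b).re := by
    have e : ∀ z w : ℂ, z * a * conj (w * conj b) = a * (conj (conj z * w) * b) := fun z w => by
      simp only [map_mul, conj_conj]; ring
    rw [e, e, re_ofReal_mul, re_ofReal_mul] at hre₀
    exact mul_left_cancel₀ ha hre₀
  have hre₁' : (conj u * v * b).re = (conj u' * v' * b).re := by
    have e : ∀ z w : ℂ, w * a * conj (z * conj b) = a * (conj z * w * b) := fun z w => by
      simp only [map_mul, conj_conj]; ring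
    rw [e, e, re_ofReal_mul, re_ofReal_mul] at hre₁
    exact mul_left_cancel₀ ha hre₁
  exact ⟨eq_of_mul_add_mul_eq_of_mul_add_mul_eq (B := normSq v) (B' := normSq v')
      (fun h => hab ((sq_eq_sq₀ (sq_nonneg a) (normSq_nonneg b)).1 h)) (by linear_combination hn₀)
      (by linear_combination hn₁),
    eq_of_re_mul_eq_of_re_conj_mul_eq hb_re hb_im hre₁' hre₀'⟩

theorem exists_norm_eq_one_smul_eq_of_conj_mul_eq {ι : Type*} {x y : ι → ℂ} {i₀ : ι}
    (hx : x i₀ ≠ 0) (h : ∀ i, conj (x i₀) * x i = conj (y i₀) * y i) :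
    ∃ c : ℂ, ‖c‖ = 1 ∧ y = c • x := by
  have hnorm : ‖x i₀‖ = ‖y i₀‖ := by
    have h₀ := h i₀
    rw [conj_mul', conj_mul'] at h₀
    exact (pow_left_inj₀ (norm_nonneg _) (norm_nonneg _) two_ne_zero).1 (mod_cast h₀)
  have hy : y i₀ ≠ 0 := norm_ne_zero_iff.1 (hnorm ▸ norm_ne_zero_iff.2 hx)
  refine ⟨conj (x i₀) / conj (y i₀), ?_, funext fun i => ?_⟩
  · rw [norm_div, norm_conj, norm_conj, hnorm, div_self (norm_ne_zero_iff.2 hy)]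
  · rw [Pi.smul_apply, smul_eq_mul, div_mul_eq_mul_div, h i,
      mul_div_cancel_left₀ _ ((map_ne_zero _).2 hy)]

theorem inn_psiv {N : ℕ} (x : Fin N → ℂ) (m : Fin 4) {n : ℕ} (hn : n + 1 < N) :
    inn x (psiv N m n) = x ⟨0, by omega⟩ * conj (coef m 0) + x ⟨n + 1, hn⟩ * conj (coef m 1) := by
  unfold inn
  rw [Fintype.sum_eq_add ⟨0, by omega⟩ ⟨n + 1, hn⟩ (by simp [Fin.ext_iff])]
  · simp [psiv]
  · rintro i ⟨h₀, h₁⟩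
    simp [psiv, Fin.val_ne_iff.2 h₀, Fin.val_ne_iff.2 h₁]

theorem coef_eq_frame2 : coef = frame2 alph.re beta := rfl

theorem beta_eq : beta = ((-(√2 / 2 * √((1 + 1 / √3) / 2)) : ℝ) : ℂ) * (1 + I) := by
  have hθ : I * (5 * (Real.pi : ℂ) / 4) = ((Real.pi / 4 + Real.pi : ℝ) : ℂ) * I := by
    push_cast; ring
  rw [beta, hθ, exp_mul_I, ← ofReal_cos, ← ofReal_sin, Real.cos_add_pi, Real.sin_add_pi,
    Real.cos_pi_div_four, Real.sin_pi_div_four]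
  push_cast; ring

theorem one_div_sqrt_three_lt_one : 1 / √3 < 1 := by
  rw [div_lt_one (by positivity), Real.lt_sqrt zero_le_one]; norm_num

theorem beta_re_ne_zero : beta.re ≠ 0 := by
  rw [beta_eq, re_ofReal_mul, add_re, one_re, I_re, add_zero, mul_one, neg_ne_zero]
  positivity

theorem beta_im_ne_zero : beta.im ≠ 0 := by
  rw [beta_eq, im_ofReal_mul, add_im, one_im, I_im, zero_add, mul_one, neg_ne_zero]
  positivity

theorem normSq_beta : normSq beta = (1 + 1 / √3) / 2 := by
  have h₂ : √2 ^ 2 = 2 := Real.sq_sqrt zero_le_two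
  have hr : √((1 + 1 / √3) / 2) ^ 2 = (1 + 1 / √3) / 2 := Real.sq_sqrt (by positivity)
  have hI : normSq (1 + I) = 2 := by norm_num [normSq_apply]
  rw [beta_eq, normSq_mul, normSq_ofReal, hI]
  linear_combination (√((1 + 1 / √3) / 2) ^ 2 / 2) * h₂ + hr

theorem alph_re_ne_zero : alph.re ≠ 0 := by
  rw [alph, ofReal_re]
  exact Real.sqrt_ne_zero'.2 (by linarith [one_div_sqrt_three_lt_one])

theorem alph_re_sq_ne_normSq_beta : alph.re ^ 2 ≠ normSq beta := by
  have h : 0 < 1 / √3 := by positivity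
  rw [alph, ofReal_re, Real.sq_sqrt (by linarith [one_div_sqrt_three_lt_one]), normSq_beta]
  linarith

/-- Theorem 2 (part Ψ): injectivity modulo a unimodular constant on
`S_Ψ = {x : x[1] ≠ 0}` (1-based first entry = 0-based index 0). -/
theorem phase_retrieval_injective_Psi (N : ℕ) (hN : 2 ≤ N) (x y : Fin N → ℂ)
    (hx : x ⟨0, by omega⟩ ≠ 0)
    (hmeas : ∀ (m : Fin 4) (n : ℕ), n + 1 < N →
      ‖inn x (psiv N m n)‖ ^ 2 = ‖inn y (psiv N m n)‖ ^ 2) :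
    ∃ c : ℂ, ‖c‖ = 1 ∧ y = c • x := by
  have hpair : ∀ n (hn : n + 1 < N), normSq (x ⟨0, by omega⟩) = normSq (y ⟨0, by omega⟩) ∧
      conj (x ⟨0, by omega⟩) * x ⟨n + 1, hn⟩ = conj (y ⟨0, by omega⟩) * y ⟨n + 1, hn⟩ :=
    fun n hn => normSq_eq_and_conj_mul_eq_of_frame2 alph_re_ne_zero beta_re_ne_zero
      beta_im_ne_zero alph_re_sq_ne_normSq_beta fun m => by
        simpa only [inn_psiv x m hn, inn_psiv y m hn, coef_eq_frame2, Complex.sq_norm]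
          using hmeas m n hn
  refine exists_norm_eq_one_smul_eq_of_conj_mul_eq hx fun i => ?_
  obtain ⟨_ | n, hn⟩ := i
  · simpa only [← normSq_eq_conj_mul_self, ofReal_inj] using (hpair 0 hN).1
  · exact (hpair n hn).2
end
end

section
/- Set A_m = a_m a_m* and Ã_m = A_m − (1/3)·I₂ for m = 1,…,4. Then for every x ∈ ℂ², the rank-one matrix Q = xx* satisfies the dual reconstruction formula Q = (3/2)·Σ_{m=1}^{4} ⟨Q, Ã_m⟩·A_m, where ⟨X,Y⟩ = trace(Y*X) is the Hilbert–Schmidt inner product of matrices. -/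
open Complex Matrix MeasureTheory

noncomputable section

/-!
The four vectors form a SIC-POVM in `ℂ²` (the Bloch vectors of the projectors `A_m` are the
vertices of a regular tetrahedron), hence a projective 2-design: `∑ A_m = 2 I` and
`∑ ⟨Q, A_m⟩ A_m = (2/3) (Q + tr Q · I)` for every `Q`. For a frame of the shape
`(a, b), (b, a), (a, -b), (-b, a)` with `a` real, both identities reduce entry by entry to
`a² + |b|² = 1`, `a² |b|² = 1/6` and `b² = i |b|²`, and the dual formula is a linear consequence
of them.
-/

lemma hs_sub_smul_one {N : ℕ} (Q A : Matrix (Fin N) (Fin N) ℂ) (c : ℂ) :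
    hs Q (A - c • 1) = hs Q A - (starRingEnd ℂ) c * Q.trace := by
  simp only [hs, conjTranspose_sub, conjTranspose_smul, conjTranspose_one, sub_mul, smul_mul,
    one_mul, trace_sub, trace_smul, smul_eq_mul, star_def]

theorem dual_reconstruction_of_design {N : ℕ} (hN : N ≠ 0) {ι : Type*} [Fintype ι]
    (A : ι → Matrix (Fin N) (Fin N) ℂ) (Q : Matrix (Fin N) (Fin N) ℂ)
    (hsum : ∑ m, A m = (N : ℂ) • 1)
    (hdesign : ∑ m, hs Q (A m) • A m = ((N : ℂ) / (N + 1)) • (Q + Q.trace • 1)) :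
    Q = ((N + 1 : ℂ) / N) • ∑ m, hs Q (A m - (1 / (N + 1) : ℂ) • 1) • A m := by
  have hN : (N : ℂ) ≠ 0 := Nat.cast_ne_zero.mpr hN
  have hN1 : (N + 1 : ℂ) ≠ 0 := by exact_mod_cast N.succ_ne_zero
  have hconj : (starRingEnd ℂ) (1 / (N + 1) : ℂ) = 1 / (N + 1) := by simp
  simp only [hs_sub_smul_one, hconj, sub_smul, Finset.sum_sub_distrib, ← Finset.smul_sum, hsum,
    hdesign, smul_sub, smul_smul, smul_add]
  rw [← sub_eq_zero]
  match_scalars <;> field_simp <;> ring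

def tetraFrame (a b : ℂ) : Fin 4 → Fin 2 → ℂ := ![![a, b], ![b, a], ![a, -b], ![-b, a]]

lemma sum_outer_tetraFrame {a b : ℂ} (ha : (starRingEnd ℂ) a = a)
    (hnorm : a ^ 2 + b * (starRingEnd ℂ) b = 1) :
    ∑ m, outer (tetraFrame a b m) (tetraFrame a b m) = (2 : ℂ) • 1 := by
  ext i j
  fin_cases i <;> fin_cases j <;>
    simp [outer, tetraFrame, Fin.sum_univ_four, ha] <;> linear_combination 2 * hnorm

lemma sum_hs_outer_smul_outer_tetraFrame {a b : ℂ} (ha : (starRingEnd ℂ) a = a)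
    (hnorm : a ^ 2 + b * (starRingEnd ℂ) b = 1)
    (hsic : a ^ 2 * (b * (starRingEnd ℂ) b) = 1 / 6)
    (hphase : b ^ 2 = I * (b * (starRingEnd ℂ) b)) (Q : Matrix (Fin 2) (Fin 2) ℂ) :
    ∑ m, hs Q (outer (tetraFrame a b m) (tetraFrame a b m)) •
        outer (tetraFrame a b m) (tetraFrame a b m) = (2 / 3 : ℂ) • (Q + Q.trace • 1) := by
  have hphase' : (starRingEnd ℂ) b ^ 2 = -I * (b * (starRingEnd ℂ) b) := by
    simpa [ha, mul_comm] using congrArg (starRingEnd ℂ) hphase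
  ext i j
  fin_cases i <;> fin_cases j <;>
    simp [hs, outer, tetraFrame, Matrix.trace, Matrix.mul_apply, Fin.sum_univ_four,
      Fin.sum_univ_two, ha]
  · linear_combination (2 * (a ^ 2 + b * (starRingEnd ℂ) b + 1) * Q 0 0) * hnorm +
      (4 * Q 1 1 - 4 * Q 0 0) * hsic
  · linear_combination (4 * Q 0 1) * hsic + (2 * a ^ 2 * Q 1 0) * (hphase + hphase')
  · linear_combination (4 * Q 1 0) * hsic + (2 * a ^ 2 * Q 0 1) * (hphase + hphase')
  · linear_combination (2 * (a ^ 2 + b * (starRingEnd ℂ) b + 1) * Q 1 1) * hnorm +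
      (4 * Q 0 0 - 4 * Q 1 1) * hsic

lemma conj_alph : (starRingEnd ℂ) alph = alph := conj_ofReal _

lemma alph_sq : alph ^ 2 = (((1 - 1 / Real.sqrt 3) / 2 : ℝ) : ℂ) := by
  have h : 1 / Real.sqrt 3 ≤ 1 := by
    rw [div_le_one (by positivity)]
    exact Real.one_le_sqrt.mpr (by norm_num)
  rw [alph, ← ofReal_pow, Real.sq_sqrt (by linarith)]

lemma beta_mul_conj_beta :
    beta * (starRingEnd ℂ) beta = (((1 + 1 / Real.sqrt 3) / 2 : ℝ) : ℂ) := by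
  have hphase : ‖exp (I * (5 * (Real.pi : ℂ) / 4))‖ = 1 := by
    simpa [mul_comm I] using norm_exp_ofReal_mul_I (5 * Real.pi / 4)
  rw [mul_conj', beta, norm_mul, hphase, one_mul, Complex.norm_of_nonneg (Real.sqrt_nonneg _),
    ← ofReal_pow, Real.sq_sqrt (by positivity)]

lemma beta_sq : beta ^ 2 = I * (beta * (starRingEnd ℂ) beta) := by
  have hphase : exp (I * (5 * (Real.pi : ℂ) / 4)) ^ 2 = I := by
    have h : ((2 : ℕ) : ℂ) * (I * (5 * Real.pi / 4)) = Real.pi / 2 * I + 2 * Real.pi * I := by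
      push_cast; ring
    rw [← exp_nat_mul, h, exp_add, exp_pi_div_two_mul_I, exp_two_pi_mul_I, mul_one]
  rw [beta_mul_conj_beta, beta, mul_pow, hphase, ← ofReal_pow, Real.sq_sqrt (by positivity)]

lemma alph_sq_add_beta_mul_conj_beta : alph ^ 2 + beta * (starRingEnd ℂ) beta = 1 := by
  rw [alph_sq, beta_mul_conj_beta]; push_cast; ring

lemma alph_sq_mul_beta_mul_conj_beta : alph ^ 2 * (beta * (starRingEnd ℂ) beta) = 1 / 6 := by
  have h3 : (Real.sqrt 3 : ℂ) ^ 2 = 3 := by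
    rw [← ofReal_pow, Real.sq_sqrt (by norm_num)]; norm_num
  have h0 : (Real.sqrt 3 : ℂ) ≠ 0 := by
    exact_mod_cast (Real.sqrt_pos.mpr (by norm_num : (0 : ℝ) < 3)).ne'
  rw [alph_sq, beta_mul_conj_beta]; push_cast
  field_simp
  linear_combination 2 * h3

/-- Dual reconstruction formula: Q = (3/2)·Σ_m ⟨Q, Ã_m⟩·A_m for Q = xx*,
where A_m = a_m a_m* and Ã_m = A_m − (1/3)·I₂. -/
theorem rank_one_dual_reconstruction (x : Fin 2 → ℂ) :
    outer x x = (3/2 : ℂ) • ∑ m : Fin 4,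
      hs (outer x x) (outer (coef m) (coef m) - (1/3 : ℂ) • (1 : Matrix (Fin 2) (Fin 2) ℂ)) •
        outer (coef m) (coef m) := by
  rw [show coef = tetraFrame alph beta from rfl]
  have hsum := sum_outer_tetraFrame conj_alph alph_sq_add_beta_mul_conj_beta
  have hdesign := sum_hs_outer_smul_outer_tetraFrame conj_alph alph_sq_add_beta_mul_conj_beta
    alph_sq_mul_beta_mul_conj_beta beta_sq (outer x x)
  have key := dual_reconstruction_of_design two_ne_zero _ (outer x x)
    (by exact_mod_cast hsum) (by norm_num [hdesign])
  norm_num at key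
  exact key
end
end

section
/- Let v₁,…,v_L ∈ ℂ^N, let x ∈ ℂ^N, and set b_l = |⟨x, v_l⟩|² for l = 1,…,L. Assume: (i) there exist real numbers c₁,…,c_L such that the Hermitian matrix Y = Σ_{l=1}^{L} c_l · v_l v_l* satisfies Y x = 0 and ⟨Y u, u⟩ > 0 for every nonzero u ∈ ℂ^N with ⟨u, x⟩ = 0; and (ii) the only matrix of the form Z = x y* + y x* (y ∈ ℂ^N) with trace(v_l v_l* · Z) = 0 for all l = 1,…,L is Z = 0. Then the unique Hermitian positive semidefinite matrix X with trace(v_l v_l* · X) = b_l for all l = 1,…,L is X = x x*. (Lemma 3: a dual certificate plus injectivity on T_x forces uniqueness of the PSD feasible point of the PhaseLift program.) -/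
open Complex Matrix MeasureTheory

noncomputable section

open scoped ComplexOrder

/-! `Y = ∑ c_l v_l v_l*` is Hermitian with `Y x = 0` and positive on `x^⊥`, hence positive
semidefinite with kernel `span {x}`. A feasible `X` has the measurements of `x x*`, so
`tr (Y X) = tr (Y x x*) = ⟨Y x, x⟩ = 0`. Writing `X = ∑ u_i u_i*`, this is
`∑ ⟨Y u_i, u_i⟩ = 0` with nonnegative terms, so every `u_i` lies in `span {x}` and
`X = t x x*` with `t` real. Then `X - x x* = x y* + y x*` for `y = (t - 1)/2 • x` is a tangent
vector in the kernel of the measurement map, so it vanishes. -/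

lemma outer_eq_vecMulVec {N : ℕ} (x y : Fin N → ℂ) : outer x y = vecMulVec x (star y) := rfl

lemma inn_eq_dotProduct {N : ℕ} (x y : Fin N → ℂ) : inn x y = x ⬝ᵥ star y := rfl

lemma conj_inn {N : ℕ} (x y : Fin N → ℂ) : starRingEnd ℂ (inn x y) = inn y x := by
  simp [inn, mul_comm]

lemma inn_mulVec_left {N : ℕ} (A : Matrix (Fin N) (Fin N) ℂ) (x y : Fin N → ℂ) :
    inn (A *ᵥ x) y = inn x (Aᴴ *ᵥ y) := by
  rw [inn_eq_dotProduct, inn_eq_dotProduct, star_mulVec, conjTranspose_conjTranspose,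
    dotProduct_comm, dotProduct_mulVec, dotProduct_comm]

lemma trace_mul_outer {N : ℕ} (A : Matrix (Fin N) (Fin N) ℂ) (x y : Fin N → ℂ) :
    trace (A * outer x y) = inn (A *ᵥ x) y := by
  rw [outer_eq_vecMulVec, mul_vecMulVec, trace_vecMulVec, inn_eq_dotProduct]

lemma trace_outer_self_mul_outer_self {N : ℕ} (a x : Fin N → ℂ) :
    trace (outer a a * outer x x) = ((‖inn x a‖ ^ 2 : ℝ) : ℂ) := by
  have : outer a a *ᵥ x = inn x a • a := by
    rw [outer_eq_vecMulVec, vecMulVec_mulVec, inn_eq_dotProduct, dotProduct_comm, op_smul_eq_smul]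
  rw [trace_mul_outer, this, inn_eq_dotProduct, smul_dotProduct, ← inn_eq_dotProduct,
    ← conj_inn x a, smul_eq_mul, Complex.mul_conj, Complex.normSq_eq_norm_sq, Complex.ofReal_pow]

lemma posSemidef_outer_self {N : ℕ} (x : Fin N → ℂ) : (outer x x).PosSemidef :=
  posSemidef_vecMulVec_self_star x

lemma exists_eq_sum_outer_self {N : ℕ} {X : Matrix (Fin N) (Fin N) ℂ} (hX : X.PosSemidef) :
    ∃ (m : ℕ) (u : Fin m → Fin N → ℂ), X = ∑ i, outer (u i) (u i) :=
  posSemidef_iff_eq_sum_vecMulVec.mp hX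

lemma isHermitian_sum_ofReal_smul_outer_self {N L : ℕ} (c : Fin L → ℝ)
    (v : Fin L → Fin N → ℂ) :
    (∑ l, (c l : ℂ) • outer (v l) (v l)).IsHermitian := by
  simp only [IsHermitian, conjTranspose_sum, conjTranspose_smul, Complex.star_def,
    Complex.conj_ofReal, (posSemidef_outer_self _).isHermitian.eq]

lemma trace_sum_smul_mul_congr {N L : ℕ} (c : Fin L → ℂ)
    (A : Fin L → Matrix (Fin N) (Fin N) ℂ) {X X' : Matrix (Fin N) (Fin N) ℂ}
    (h : ∀ l, trace (A l * X) = trace (A l * X')) :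
    trace ((∑ l, c l • A l) * X) = trace ((∑ l, c l • A l) * X') := by
  simp only [Matrix.sum_mul, trace_sum, smul_mul, trace_smul, h]

lemma outer_add_outer_ofReal_smul {N : ℕ} (x : Fin N → ℂ) (r : ℝ) :
    outer x ((r : ℂ) • x) + outer ((r : ℂ) • x) x = ((2 * r : ℝ) : ℂ) • outer x x := by
  ext i j
  simp only [Matrix.add_apply, Matrix.smul_apply, outer, Pi.smul_apply, smul_eq_mul, map_mul,
    conj_ofReal, ofReal_mul, ofReal_ofNat]
  ring

lemma outer_smul_smul_self {N : ℕ} (a : ℂ) (x : Fin N → ℂ) :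
    outer (a • x) (a • x) = (Complex.normSq a : ℂ) • outer x x := by
  ext i j
  simp only [outer, Pi.smul_apply, smul_eq_mul, map_mul, Matrix.smul_apply, ← Complex.mul_conj]
  ring

section Certificate

variable {N : ℕ} {Y : Matrix (Fin N) (Fin N) ℂ} {x : Fin N → ℂ}

lemma exists_eq_add_smul_of_inn_eq_zero (u : Fin N → ℂ) :
    ∃ (w : Fin N → ℂ) (a : ℂ), inn w x = 0 ∧ u = w + a • x := by
  by_cases hx : x = 0
  · exact ⟨u, 0, by simp [hx, inn], by simp⟩
  have hxx : inn x x ≠ 0 := fun h => hx (dotProduct_self_star_eq_zero.mp h)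
  refine ⟨u - (inn u x / inn x x) • x, inn u x / inn x x, ?_, by simp⟩
  rw [inn_eq_dotProduct, sub_dotProduct, smul_dotProduct, ← inn_eq_dotProduct,
    ← inn_eq_dotProduct, smul_eq_mul, div_mul_cancel₀ _ hxx, sub_self]

variable (hY : Y.IsHermitian) (hYx : Y *ᵥ x = 0)
include hY hYx

lemma inn_mulVec_add_smul_self (w : Fin N → ℂ) (a : ℂ) :
    inn (Y *ᵥ (w + a • x)) (w + a • x) = inn (Y *ᵥ w) w := by
  have hwx : inn (Y *ᵥ w) x = 0 := by rw [inn_mulVec_left, hY.eq, hYx]; simp [inn]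
  rw [mulVec_add, mulVec_smul, hYx, smul_zero, add_zero, inn_eq_dotProduct, star_add,
    dotProduct_add, star_smul, dotProduct_smul, ← inn_eq_dotProduct, ← inn_eq_dotProduct, hwx,
    smul_zero, add_zero]

variable (hYpos : ∀ u : Fin N → ℂ, u ≠ 0 → inn u x = 0 → 0 < (inn (Y *ᵥ u) u).re)
include hYpos

lemma re_inn_mulVec_self_nonneg (u : Fin N → ℂ) : 0 ≤ (inn (Y *ᵥ u) u).re := by
  obtain ⟨w, a, hw, rfl⟩ := exists_eq_add_smul_of_inn_eq_zero (x := x) u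
  rw [inn_mulVec_add_smul_self hY hYx]
  rcases eq_or_ne w 0 with rfl | hw0
  · simp [inn]
  · exact (hYpos w hw0 hw).le

lemma exists_eq_smul_of_re_inn_mulVec_self_eq_zero {u : Fin N → ℂ}
    (h : (inn (Y *ᵥ u) u).re = 0) : ∃ a : ℂ, u = a • x := by
  obtain ⟨w, a, hw, rfl⟩ := exists_eq_add_smul_of_inn_eq_zero (x := x) u
  rw [inn_mulVec_add_smul_self hY hYx] at h
  obtain rfl : w = 0 := by
    by_contra hw0
    exact (hYpos w hw0 hw).ne' h
  exact ⟨a, zero_add _⟩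

lemma exists_eq_ofReal_smul_outer_self_of_trace_mul_eq_zero {X : Matrix (Fin N) (Fin N) ℂ}
    (hX : X.PosSemidef) (h : trace (Y * X) = 0) : ∃ t : ℝ, X = (t : ℂ) • outer x x := by
  obtain ⟨m, u, rfl⟩ := exists_eq_sum_outer_self hX
  have hsum : ∑ i, (inn (Y *ᵥ u i) (u i)).re = 0 := by
    simpa [Matrix.mul_sum, trace_sum, trace_mul_outer, Complex.re_sum] using
      congrArg Complex.re h
  have hzero := (Finset.sum_eq_zero_iff_of_nonneg fun i _ =>
    re_inn_mulVec_self_nonneg hY hYx hYpos (u i)).mp hsum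
  choose a ha using fun i =>
    exists_eq_smul_of_re_inn_mulVec_self_eq_zero hY hYx hYpos (hzero i (Finset.mem_univ i))
  refine ⟨∑ i, Complex.normSq (a i), ?_⟩
  simp only [ha, outer_smul_smul_self, Complex.ofReal_sum, Finset.sum_smul]

end Certificate

/-- Lemma 3: if a dual certificate Y = Σ c_l v_l v_l* exists (Yx = 0 and Y positive
definite on the orthogonal complement of x) and the measurement map is injective on
the tangent space T_x = {xy* + yx*}, then X = xx* is the unique Hermitian PSD matrix
satisfying trace(v_l v_l*·X) = |⟨x,v_l⟩|² for all l. -/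
theorem dual_certificate_unique_PSD (N L : ℕ) (v : Fin L → Fin N → ℂ) (x : Fin N → ℂ)
    (hcert : ∃ c : Fin L → ℝ,
      (∑ l, (c l : ℂ) • outer (v l) (v l)).mulVec x = 0 ∧
      (∀ u : Fin N → ℂ, u ≠ 0 → inn u x = 0 →
        0 < (inn ((∑ l, (c l : ℂ) • outer (v l) (v l)).mulVec u) u).re))
    (hinj : ∀ y : Fin N → ℂ,
      (∀ l, Matrix.trace (outer (v l) (v l) * (outer x y + outer y x)) = 0) →
      outer x y + outer y x = 0) :
    ((outer x x).PosSemidef ∧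
      ∀ l, Matrix.trace (outer (v l) (v l) * outer x x)
        = ((‖inn x (v l)‖ ^ 2 : ℝ) : ℂ)) ∧
    (∀ X : Matrix (Fin N) (Fin N) ℂ, X.PosSemidef →
      (∀ l, Matrix.trace (outer (v l) (v l) * X)
        = ((‖inn x (v l)‖ ^ 2 : ℝ) : ℂ)) →
      X = outer x x) := by
  have hmeas l := trace_outer_self_mul_outer_self (v l) x
  refine ⟨⟨posSemidef_outer_self x, hmeas⟩, fun X hX hXmeas => ?_⟩
  obtain ⟨c, hYx, hYpos⟩ := hcert
  have hXx l : trace (outer (v l) (v l) * X) = trace (outer (v l) (v l) * outer x x) :=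
    (hXmeas l).trans (hmeas l).symm
  have hYX : trace ((∑ l, (c l : ℂ) • outer (v l) (v l)) * X) = 0 := by
    rw [trace_sum_smul_mul_congr _ _ hXx, trace_mul_outer, hYx]
    simp [inn]
  obtain ⟨t, rfl⟩ := exists_eq_ofReal_smul_outer_self_of_trace_mul_eq_zero
    (isHermitian_sum_ofReal_smul_outer_self c v) hYx hYpos hX hYX
  set y : Fin N → ℂ := (((t - 1) / 2 : ℝ) : ℂ) • x
  have hT : outer x y + outer y x = (t : ℂ) • outer x x - outer x x := by
    rw [outer_add_outer_ofReal_smul]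
    push_cast
    module
  have h0 := hinj _ fun l => by rw [hT, Matrix.mul_sub, trace_sub, hXx, sub_self]
  rwa [hT, sub_eq_zero] at h0
end
end
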